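/- Let A be an algebra and let R, S be reflexive compatible binary relations on A. Then [R,S|1] is a compatible relation on A, i.e., it is preserved by every operation of A. -/

import Mathlib

open FirstOrder Language

universe u

/-- A binary relation on a structure `A` is compatible (admissible) if it is preserved
by every operation (function symbol) of the language. -/
def Compatible (L : Language) {A : Type u} [L.Structure A] (R : A → A → Prop) : Prop :=
  ∀ (n : ℕ) (f : L.Functions n) (a b : Fin n → A),
    (∀ i, R (a i) (b i)) → R (Structure.funMap f a) (Structure.funMap f b)

/-- `(x, y; z, w) ∈ M(R, S)`: there is a term `t` and tuples `a R a'`, `b S b'` with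
`x = t(a,b)`, `y = t(a,b')`, `z = t(a',b)`, `w = t(a',b')`. -/
def InM (L : Language) {A : Type u} [L.Structure A] (R S : A → A → Prop)
    (x y z w : A) : Prop :=
  ∃ (n m : ℕ) (t : L.Term (Fin n ⊕ Fin m)) (a a' : Fin n → A) (b b' : Fin m → A),
    (∀ i, R (a i) (a' i)) ∧ (∀ j, S (b j) (b' j)) ∧
      x = t.realize (Sum.elim a b) ∧ y = t.realize (Sum.elim a b') ∧
      z = t.realize (Sum.elim a' b) ∧ w = t.realize (Sum.elim a' b')

/-- `[R, S | 1]`: the transitive closure of `{(z,w) : (x,x;z,w) ∈ M(R,S) for some x}`. -/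
def comm1 (L : Language) {A : Type u} [L.Structure A] (R S : A → A → Prop) :
    A → A → Prop :=
  Relation.TransGen (fun z w => ∃ x, InM L R S x x z w)

/-- Relational composition. -/
def rcomp {A : Type u} (R S : A → A → Prop) : A → A → Prop :=
  fun a c => ∃ b, R a b ∧ S b c

/-- Converse of a relation. -/
def rconv {A : Type u} (R : A → A → Prop) : A → A → Prop := fun a b => R b a

/-- Intersection of relations. -/
def rinter {A : Type u} (R S : A → A → Prop) : A → A → Prop := fun a b => R a b ∧ S a b

/-- A congruence: a compatible equivalence relation. -/
def IsCongruence (L : Language) {A : Type u} [L.Structure A] (θ : A → A → Prop) : Prop :=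
  Equivalence θ ∧ Compatible L θ

/-- A tolerance: a reflexive symmetric compatible relation. -/
def IsTolerance (L : Language) {A : Type u} [L.Structure A] (T : A → A → Prop) : Prop :=
  Reflexive T ∧ Symmetric T ∧ Compatible L T

/-- `Cg R`: the smallest congruence containing `R` (intersection of all congruences ⊇ R). -/
def Cg (L : Language) {A : Type u} [L.Structure A] (R : A → A → Prop) : A → A → Prop :=
  fun a b => ∀ θ : A → A → Prop, IsCongruence L θ → (∀ x y, R x y → θ x y) → θ a b

/-- `R°`: the smallest tolerance containing `R`. -/
def tolC (L : Language) {A : Type u} [L.Structure A] (R : A → A → Prop) : A → A → Prop :=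
  fun a b => ∀ T : A → A → Prop, IsTolerance L T → (∀ x y, R x y → T x y) → T a b

/-- `K(R,S;V) = {(z,w) : ∃ x y, (x,y;z,w) ∈ M(R,S) ∧ x V y}`. -/
def Kop (L : Language) {A : Type u} [L.Structure A] (R S V : A → A → Prop) :
    A → A → Prop :=
  fun z w => ∃ x y, InM L R S x y z w ∧ V x y

/-- The join `γ ∨ D`: the smallest congruence containing both `γ` and `D`. -/
def cgJoin (L : Language) {A : Type u} [L.Structure A] (γ D : A → A → Prop) :
    A → A → Prop :=
  fun a b => ∀ θ : A → A → Prop, IsCongruence L θ → (∀ x y, γ x y → θ x y) →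
    (∀ x y, D x y → θ x y) → θ a b

variable {L : Language} {A : Type u} [L.Structure A]

/-!
Applying a basic operation `f` entrywise to matrices of `M(R,S)` gives again a matrix of
`M(R,S)`: if the `i`-th matrix comes from the term `tᵢ`, take `f(t₁, …, tₖ)` with the variables of
the `tᵢ` kept disjoint. Hence the generating relation of `[R,S|1]` is compatible, and it is
reflexive because `R` is. The transitive closure of a reflexive compatible relation is compatible,
since the arguments of `f` can be moved one coordinate at a time.
-/

namespace Relation

theorem transGen_pi_of_reflexive {ι α : Type*} [Finite ι] {r : α → α → Prop}
    (hr : Reflexive r) {a b : ι → α} (h : ∀ i, TransGen r (a i) (b i)) :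
    TransGen (fun u v : ι → α => ∀ i, r (u i) (v i)) a b := by
  classical
  cases nonempty_fintype ι
  have update_step : ∀ (u : ι → α) (j : ι) {x y : α}, TransGen r x y →
      TransGen (fun u v : ι → α => ∀ i, r (u i) (v i)) (Function.update u j x)
        (Function.update u j y) := fun u j _ _ hxy =>
    hxy.lift (Function.update u j) fun x y hxy i => by
      rcases eq_or_ne i j with rfl | hij
      · simpa using hxy
      · simpa [hij] using hr (u i)
  suffices ∀ s : Finset ι, TransGen (fun u v : ι → α => ∀ i, r (u i) (v i)) a (s.piecewise b a) by
    simpa using this Finset.univ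
  intro s
  induction s using Finset.induction_on with
  | empty => simpa using TransGen.single fun i => hr (a i)
  | insert j s hj ih =>
    have step := update_step (s.piecewise b a) j (h j)
    rw [← Finset.piecewise_eq_of_notMem s b a hj, Function.update_eq_self] at step
    rw [Finset.piecewise_insert]
    exact ih.trans step

end Relation

theorem Compatible.transGen {B : A → A → Prop} (hrefl : Reflexive B) (hc : Compatible L B) :
    Compatible L (Relation.TransGen B) := fun _ f _ _ hab =>
  (Relation.transGen_pi_of_reflexive hrefl hab).lift (Structure.funMap f) (hc _ f)

theorem inM_of_fintype {R S : A → A → Prop} {α β : Type*} [Fintype α] [Fintype β]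
    (t : L.Term (α ⊕ β)) {a a' : α → A} {b b' : β → A} (ha : ∀ i, R (a i) (a' i))
    (hb : ∀ j, S (b j) (b' j)) :
    InM L R S (t.realize (Sum.elim a b)) (t.realize (Sum.elim a b'))
      (t.realize (Sum.elim a' b)) (t.realize (Sum.elim a' b')) := by
  let eα := Fintype.equivFin α
  let eβ := Fintype.equivFin β
  refine ⟨_, _, t.relabel (Sum.map eα eβ), a ∘ eα.symm, a' ∘ eα.symm, b ∘ eβ.symm,
    b' ∘ eβ.symm, fun i => ha _, fun j => hb _, ?_, ?_, ?_, ?_⟩ <;>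
  simp [Term.realize_relabel, Sum.elim_comp_map, Function.comp_assoc]

theorem InM.funMap {R S : A → A → Prop} {n : ℕ} (f : L.Functions n) {x y z w : Fin n → A}
    (h : ∀ i, InM L R S (x i) (y i) (z i) (w i)) :
    InM L R S (Structure.funMap f x) (Structure.funMap f y) (Structure.funMap f z)
      (Structure.funMap f w) := by
  choose k m t a a' b b' ha hb hx hy hz hw using h
  obtain rfl := funext hx
  obtain rfl := funext hy
  obtain rfl := funext hz
  obtain rfl := funext hw
  let T : L.Term ((Σ i, Fin (k i)) ⊕ (Σ i, Fin (m i))) :=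
    Term.func f fun i => (t i).relabel (Sum.map (Sigma.mk i) (Sigma.mk i))
  have realize_T : ∀ (a : ∀ i, Fin (k i) → A) (b : ∀ i, Fin (m i) → A),
      T.realize (Sum.elim (fun p => a p.1 p.2) (fun p => b p.1 p.2)) =
        Structure.funMap f fun i => (t i).realize (Sum.elim (a i) (b i)) := by
    intro a b
    simp only [T, Term.realize, Term.realize_relabel, Sum.elim_comp_map]
    rfl
  simpa only [realize_T] using inM_of_fintype T (fun p : Σ i, Fin (k i) => ha p.1 p.2)
    (fun p : Σ i, Fin (m i) => hb p.1 p.2)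

theorem inM_self {R : A → A → Prop} (S : A → A → Prop) (hR : Reflexive R) (z : A) :
    InM L R S z z z z :=
  ⟨1, 0, Term.var (Sum.inl 0), fun _ => z, fun _ => z, finZeroElim, finZeroElim,
    fun _ => hR z, finZeroElim, rfl, rfl, rfl, rfl⟩

theorem stmt1 (R S : A → A → Prop) (hRrefl : Reflexive R) :
    Compatible L (comm1 L R S) := by
  refine Compatible.transGen (fun z => ⟨z, inM_self S hRrefl z⟩) fun n f z w h => ?_
  choose x hx using h
  exact ⟨Structure.funMap f x, InM.funMap f hx⟩
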